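/- Let f : R^n → R be C² with L-Lipschitz Hessian (operator norm), η ∈ (0, 1/(2L)), and let x⁺ be a global minimizer of x' ↦ ⟨g, x'−x⟩ + (1/2)⟨x'−x, M(x'−x)⟩ + (1/(6η))‖x'−x‖³ for given x, g, symmetric M. Then ‖∇f(x⁺)‖^{3/2} ≤ (3/η^{3/2})‖x⁺−x‖³ + (3η^{3/2}/4)‖M − ∇²f(x)‖_F³ + 3‖g − ∇f(x)‖^{3/2}, where ‖·‖_F is the Frobenius norm. -/

import Mathlib

open RealInnerProductSpace

/-- The Frobenius norm of a linear operator on `EuclideanSpace ℝ (Fin n)`,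
i.e. the square root of the sum of squares of its matrix entries. -/
noncomputable def frobNorm {n : ℕ}
    (T : EuclideanSpace ℝ (Fin n) →L[ℝ] EuclideanSpace ℝ (Fin n)) : ℝ :=
  Real.sqrt (∑ i, ∑ j, (T (EuclideanSpace.single j 1) i) ^ 2)

lemma frobNorm_nonneg {n : ℕ} (T : EuclideanSpace ℝ (Fin n) →L[ℝ] EuclideanSpace ℝ (Fin n)) :
    0 ≤ frobNorm T := Real.sqrt_nonneg _

lemma rpow32_eq_sqrt {x : ℝ} (hx : 0 ≤ x) : x ^ ((3:ℝ)/2) = Real.sqrt (x ^ 3) := by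
  rw [show ((3:ℝ)/2) = (3:ℕ) * (1/2 : ℝ) by norm_num, Real.rpow_mul hx,
    Real.rpow_natCast, ← Real.sqrt_eq_rpow]

lemma sq_rpow32 {a : ℝ} (ha : 0 ≤ a) : (a ^ 2) ^ ((3:ℝ)/2) = a ^ 3 := by
  rw [rpow32_eq_sqrt (sq_nonneg a), show (a^2)^3 = (a^3)^2 by ring,
    Real.sqrt_sq (by positivity)]

lemma add_rpow32_le {u v : ℝ} (hu : 0 ≤ u) (hv : 0 ≤ v) :
    (u + v) ^ ((3:ℝ)/2) ≤ Real.sqrt 2 * (u ^ ((3:ℝ)/2) + v ^ ((3:ℝ)/2)) := by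
  rw [rpow32_eq_sqrt (by linarith), rpow32_eq_sqrt hu, rpow32_eq_sqrt hv]
  set a := Real.sqrt u with ha
  set b := Real.sqrt v with hb
  have hau : u = a ^ 2 := (Real.sq_sqrt hu).symm
  have hbv : v = b ^ 2 := (Real.sq_sqrt hv).symm
  have ha0 : 0 ≤ a := Real.sqrt_nonneg u
  have hb0 : 0 ≤ b := Real.sqrt_nonneg v
  have h1 : Real.sqrt (u ^ 3) = a ^ 3 := by
    rw [hau, show (a^2)^3 = (a^3)^2 by ring, Real.sqrt_sq (by positivity)]
  have h2 : Real.sqrt (v ^ 3) = b ^ 3 := by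
    rw [hbv, show (b^2)^3 = (b^3)^2 by ring, Real.sqrt_sq (by positivity)]
  rw [h1, h2, hau, hbv]
  have key : (a^2 + b^2) ^ 3 ≤ 2 * (a^3 + b^3)^2 := by
    nlinarith [mul_nonneg (sq_nonneg (a - b))
      (show (0:ℝ) ≤ a^4 + 2*a^3*b + 2*a*b^3 + b^4 by positivity)]
  calc Real.sqrt ((a^2 + b^2)^3) ≤ Real.sqrt (2 * (a^3+b^3)^2) := Real.sqrt_le_sqrt key
    _ = Real.sqrt 2 * (a^3 + b^3) := by
        rw [Real.sqrt_mul (by norm_num), Real.sqrt_sq (by positivity)]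

lemma euclid_norm_eq {n : ℕ} (u : EuclideanSpace ℝ (Fin n)) :
    ‖u‖ = Real.sqrt (∑ i, (u i) ^ 2) := by
  rw [EuclideanSpace.norm_eq]
  congr 1
  exact Finset.sum_congr rfl fun i _ => by rw [Real.norm_eq_abs, sq_abs]

lemma norm_apply_le_frobNorm {n : ℕ}
    (T : EuclideanSpace ℝ (Fin n) →L[ℝ] EuclideanSpace ℝ (Fin n))
    (u : EuclideanSpace ℝ (Fin n)) : ‖T u‖ ≤ frobNorm T * ‖u‖ := by
  classical
  have hu : u = ∑ j, u j • EuclideanSpace.single j 1 := by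
    ext i
    rw [WithLp.ofLp_sum, Finset.sum_apply]
    simp [EuclideanSpace.single_apply]
  have happ : ∀ i, T u i = ∑ j, T (EuclideanSpace.single j 1) i * u j := by
    intro i
    conv_lhs => rw [hu]
    rw [map_sum, WithLp.ofLp_sum, Finset.sum_apply]
    exact Finset.sum_congr rfl fun j _ => by simp [mul_comm]
  rw [euclid_norm_eq, euclid_norm_eq, frobNorm, ← Real.sqrt_mul (by positivity)]
  apply Real.sqrt_le_sqrt
  rw [Finset.sum_mul]
  apply Finset.sum_le_sum
  intro i _
  rw [happ i]
  exact Finset.sum_mul_sq_le_sq_mul_sq _ _ _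

lemma gradient_contDiff {n : ℕ} {f : EuclideanSpace ℝ (Fin n) → ℝ} (hf : ContDiff ℝ 2 f) :
    ContDiff ℝ 1 (gradient f) := by
  have h1 : ContDiff ℝ 1 (fderiv ℝ f) := hf.fderiv_right (by norm_num)
  have h2 : ContDiff ℝ 1 ((InnerProductSpace.toDual ℝ (EuclideanSpace ℝ (Fin n))).symm) :=
    LinearIsometryEquiv.contDiff _
  exact h2.comp h1

lemma taylor_bound {n : ℕ} {f : EuclideanSpace ℝ (Fin n) → ℝ} (hf : ContDiff ℝ 2 f) {L : ℝ}
    (hL : 0 ≤ L)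
    (hLip : ∀ x y : EuclideanSpace ℝ (Fin n),
      ‖fderiv ℝ (gradient f) y - fderiv ℝ (gradient f) x‖ ≤ L * ‖y - x‖)
    (x y : EuclideanSpace ℝ (Fin n)) :
    ‖gradient f y - gradient f x - fderiv ℝ (gradient f) x (y - x)‖ ≤ L * ‖y - x‖ ^ 2 := by
  have hG : ∀ z, HasFDerivAt (gradient f) (fderiv ℝ (gradient f) z) z := fun z =>
    (((gradient_contDiff hf).differentiable one_ne_zero) z).hasFDerivAt
  have key := Convex.norm_image_sub_le_of_norm_hasFDerivWithin_le'
    (f := gradient f) (f' := fun z => fderiv ℝ (gradient f) z)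
    (x := x) (y := y)
    (φ := fderiv ℝ (gradient f) x) (C := L * ‖y - x‖) (s := Metric.closedBall x ‖y - x‖)
    (fun z _ => (hG z).hasFDerivWithinAt)
    (fun z hz => by
      calc ‖fderiv ℝ (gradient f) z - fderiv ℝ (gradient f) x‖ ≤ L * ‖z - x‖ := hLip x z
        _ ≤ L * ‖y - x‖ := by
            have hzx : ‖z - x‖ ≤ ‖y - x‖ := by
              simpa [dist_eq_norm] using Metric.mem_closedBall.mp hz
            exact mul_le_mul_of_nonneg_left hzx hL)
    (convex_closedBall _ _)
    (Metric.mem_closedBall_self (norm_nonneg _))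
    (by simp [Metric.mem_closedBall, dist_eq_norm])
  calc ‖gradient f y - gradient f x - fderiv ℝ (gradient f) x (y - x)‖
      ≤ L * ‖y - x‖ * ‖y - x‖ := key
    _ = L * ‖y - x‖ ^ 2 := by ring

lemma foc {n : ℕ} {η : ℝ} (hη : 0 < η) (x g xp : EuclideanSpace ℝ (Fin n))
    (M : EuclideanSpace ℝ (Fin n) →L[ℝ] EuclideanSpace ℝ (Fin n))
    (hM : ∀ u v : EuclideanSpace ℝ (Fin n), ⟪M u, v⟫ = ⟪u, M v⟫)
    (hmin : ∀ x' : EuclideanSpace ℝ (Fin n),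
      ⟪g, xp - x⟫ + 1 / 2 * ⟪xp - x, M (xp - x)⟫ + 1 / (6 * η) * ‖xp - x‖ ^ 3 ≤
      ⟪g, x' - x⟫ + 1 / 2 * ⟪x' - x, M (x' - x)⟫ + 1 / (6 * η) * ‖x' - x‖ ^ 3) :
    g + M (xp - x) + ((1 / (2 * η)) * ‖xp - x‖) • (xp - x) = 0 := by
  set s : EuclideanSpace ℝ (Fin n) := xp - x with hs
  set w : EuclideanSpace ℝ (Fin n) := g + M s + ((1 / (2 * η)) * ‖s‖) • s with hw
  have key : ∀ v : EuclideanSpace ℝ (Fin n), ⟪w, v⟫ = 0 := by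
    intro v
    set ψ : ℝ → ℝ := fun t =>
      (⟪g, s⟫ + t * ⟪g, v⟫)
      + 1/2 * (⟪s, M s⟫ + t * (⟪v, M s⟫ + ⟪s, M v⟫) + t^2 * ⟪v, M v⟫)
      + 1/(6*η) * ((‖s‖^2 + t * (2 * ⟪s, v⟫) + t^2 * ‖v‖^2) ^ ((3:ℝ)/2)) with hψ
    have hψ_eq : ∀ t : ℝ, ψ t =
        ⟪g, (xp + t • v) - x⟫ + 1/2 * ⟪(xp + t • v) - x, M ((xp + t • v) - x)⟫
        + 1/(6*η) * ‖(xp + t • v) - x‖^3 := by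
      intro t
      have hx' : (xp + t • v) - x = s + t • v := by rw [hs]; abel
      rw [hx']
      have hnorm : ‖s + t • v‖^2 = ‖s‖^2 + t * (2 * ⟪s, v⟫) + t^2 * ‖v‖^2 := by
        rw [norm_add_sq_real, real_inner_smul_right, norm_smul]
        simp [mul_pow]
        ring
      have h3 : ‖s + t • v‖^3 = (‖s‖^2 + t * (2 * ⟪s, v⟫) + t^2 * ‖v‖^2) ^ ((3:ℝ)/2) := by
        rw [← hnorm, sq_rpow32 (norm_nonneg _)]
      rw [hψ]
      simp only [← h3, inner_add_right, real_inner_smul_right, map_add, map_smul,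
        inner_add_left, real_inner_smul_left]
      ring
    have hmin' : IsLocalMin ψ 0 := by
      apply Filter.Eventually.of_forall
      intro t
      rw [hψ_eq t, hψ_eq 0]
      simp only [zero_smul, add_zero]
      exact hmin _
    have hq : HasDerivAt (fun t : ℝ => ‖s‖^2 + t * (2 * ⟪s, v⟫) + t^2 * ‖v‖^2)
        (2 * ⟪s, v⟫) 0 := by
      have h1 : HasDerivAt (fun t : ℝ => t * (2 * ⟪s, v⟫)) (2 * ⟪s, v⟫) 0 := by
        simpa using (hasDerivAt_id (0:ℝ)).mul_const (2 * ⟪s, v⟫)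
      have h2 : HasDerivAt (fun t : ℝ => t^2 * ‖v‖^2) 0 0 := by
        simpa using ((hasDerivAt_pow 2 (0:ℝ)).mul_const (‖v‖^2))
      have := (h1.const_add (‖s‖^2)).add h2
      rw [add_zero] at this
      exact this
    have hrpow : HasDerivAt (fun y : ℝ => y ^ ((3:ℝ)/2))
        ((3:ℝ)/2 * (‖s‖^2) ^ ((3:ℝ)/2 - 1))
        (‖s‖^2 + (0:ℝ) * (2 * ⟪s, v⟫) + (0:ℝ)^2 * ‖v‖^2) := by
      have h0 : ‖s‖^2 + (0:ℝ) * (2 * ⟪s, v⟫) + (0:ℝ)^2 * ‖v‖^2 = ‖s‖^2 := by ring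
      rw [h0]
      exact Real.hasDerivAt_rpow_const (Or.inr (by norm_num))
    have hcomp : HasDerivAt (fun t : ℝ =>
        (‖s‖^2 + t * (2 * ⟪s, v⟫) + t^2 * ‖v‖^2) ^ ((3:ℝ)/2))
        ((3:ℝ)/2 * (‖s‖^2) ^ ((3:ℝ)/2 - 1) * (2 * ⟪s, v⟫)) 0 := by
      have := hrpow.comp (0:ℝ) hq
      exact this
    have hlin : HasDerivAt (fun t : ℝ => ⟪g, s⟫ + t * ⟪g, v⟫) (⟪g, v⟫) 0 := by
      simpa using ((hasDerivAt_id (0:ℝ)).mul_const ⟪g, v⟫).const_add ⟪g, s⟫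
    have hquad : HasDerivAt (fun t : ℝ =>
        ⟪s, M s⟫ + t * (⟪v, M s⟫ + ⟪s, M v⟫) + t^2 * ⟪v, M v⟫)
        (⟪v, M s⟫ + ⟪s, M v⟫) 0 := by
      have h1 : HasDerivAt (fun t : ℝ => t * (⟪v, M s⟫ + ⟪s, M v⟫)) (⟪v, M s⟫ + ⟪s, M v⟫) 0 := by
        simpa using (hasDerivAt_id (0:ℝ)).mul_const (⟪v, M s⟫ + ⟪s, M v⟫)
      have h2 : HasDerivAt (fun t : ℝ => t^2 * ⟪v, M v⟫) 0 0 := by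
        simpa using ((hasDerivAt_pow 2 (0:ℝ)).mul_const ⟪v, M v⟫)
      have := (h1.const_add ⟪s, M s⟫).add h2
      rw [add_zero] at this
      exact this
    have hderiv : HasDerivAt ψ
        (⟪g, v⟫ + 1/2 * (⟪v, M s⟫ + ⟪s, M v⟫)
          + 1/(6*η) * ((3:ℝ)/2 * (‖s‖^2) ^ ((3:ℝ)/2 - 1) * (2 * ⟪s, v⟫))) 0 := by
      exact (hlin.add (hquad.const_mul (1/2))).add (hcomp.const_mul (1/(6*η)))
    have hzero := hmin'.hasDerivAt_eq_zero hderiv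
    have hhalf : (‖s‖^2 : ℝ) ^ ((3:ℝ)/2 - 1) = ‖s‖ := by
      rw [show ((3:ℝ)/2 - 1) = (1/2 : ℝ) by norm_num, ← Real.sqrt_eq_rpow,
        Real.sqrt_sq (norm_nonneg _)]
    rw [hhalf] at hzero
    have hMs : ⟪v, M s⟫ = ⟪M s, v⟫ := real_inner_comm _ _
    have hMs2 : ⟪s, M v⟫ = ⟪M s, v⟫ := (hM s v).symm
    rw [hw]
    rw [inner_add_left, inner_add_left, real_inner_smul_left]
    rw [hMs, hMs2] at hzero
    field_simp at hzero ⊢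
    linarith [hzero]
  have := key w
  rwa [inner_self_eq_zero] at this

set_option maxHeartbeats 1000000 in
theorem inexact_crn_grad_bound_three_halves (n : ℕ) (f : EuclideanSpace ℝ (Fin n) → ℝ)
    (L : ℝ) (hL : 0 < L) (hf : ContDiff ℝ 2 f)
    (hLip : ∀ x y : EuclideanSpace ℝ (Fin n),
      ‖fderiv ℝ (gradient f) y - fderiv ℝ (gradient f) x‖ ≤ L * ‖y - x‖)
    (η : ℝ) (hη : 0 < η) (hηL : η < 1 / (2 * L))
    (x g xp : EuclideanSpace ℝ (Fin n))
    (M : EuclideanSpace ℝ (Fin n) →L[ℝ] EuclideanSpace ℝ (Fin n))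
    (hM : ∀ u v : EuclideanSpace ℝ (Fin n), ⟪M u, v⟫ = ⟪u, M v⟫)
    (hmin : ∀ x' : EuclideanSpace ℝ (Fin n),
      ⟪g, xp - x⟫ + 1 / 2 * ⟪xp - x, M (xp - x)⟫ + 1 / (6 * η) * ‖xp - x‖ ^ 3 ≤
      ⟪g, x' - x⟫ + 1 / 2 * ⟪x' - x, M (x' - x)⟫ + 1 / (6 * η) * ‖x' - x‖ ^ 3) :
    ‖gradient f xp‖ ^ ((3 : ℝ) / 2) ≤
      3 / η ^ ((3 : ℝ) / 2) * ‖xp - x‖ ^ 3 +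
      3 * η ^ ((3 : ℝ) / 2) / 4 * frobNorm (M - fderiv ℝ (gradient f) x) ^ 3 +
      3 * ‖g - gradient f x‖ ^ ((3 : ℝ) / 2) := by
  have hFOC := foc hη x g xp M hM hmin
  set s : EuclideanSpace ℝ (Fin n) := xp - x with hsdef
  set r : ℝ := ‖s‖ with hrdef
  set H := fderiv ℝ (gradient f) x with hHdef
  set F : ℝ := frobNorm (M - H) with hFdef
  set c : ℝ := ‖g - gradient f x‖ with hcdef
  have hr0 : 0 ≤ r := norm_nonneg _
  have hF0 : 0 ≤ F := frobNorm_nonneg _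
  have hc0 : 0 ≤ c := norm_nonneg _
  -- basic inequality on L
  have hLη : L ≤ 1 / (2 * η) := by
    rw [lt_div_iff₀ (by positivity)] at hηL
    rw [le_div_iff₀ (by positivity)]
    nlinarith
  -- decomposition of the gradient
  have hk0 : 0 ≤ 1 / (2 * η) * r := by positivity
  have hdecomp : gradient f xp =
      (gradient f xp - gradient f x - H s) - (M - H) s - (g - gradient f x)
      - ((1 / (2 * η)) * r) • s := by
    have h2 : (M - H) s = M s - H s := by simp
    rw [h2]
    have hrw : (gradient f xp - gradient f x - H s) - (M s - H s) - (g - gradient f x)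
        - ((1 / (2 * η)) * r) • s
        = gradient f xp - (g + M s + ((1 / (2 * η)) * r) • s) := by abel
    rw [hrw, hFOC, sub_zero]
  -- norm bound
  have hN : ‖gradient f xp‖ ≤ L * r ^ 2 + F * r + c + 1 / (2 * η) * r * r := by
    conv_lhs => rw [hdecomp]
    have t1 : ‖gradient f xp - gradient f x - H s‖ ≤ L * r ^ 2 := by
      have := taylor_bound hf hL.le hLip x xp
      rw [← hsdef] at this
      exact this
    have t2 : ‖(M - H) s‖ ≤ F * r := norm_apply_le_frobNorm _ _
    have t4 : ‖((1 / (2 * η)) * r) • s‖ = 1 / (2 * η) * r * r := by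
      rw [norm_smul, Real.norm_eq_abs, abs_of_nonneg hk0]
    calc ‖(gradient f xp - gradient f x - H s) - (M - H) s - (g - gradient f x)
        - ((1 / (2 * η)) * r) • s‖
        ≤ ‖(gradient f xp - gradient f x - H s) - (M - H) s - (g - gradient f x)‖
          + ‖((1 / (2 * η)) * r) • s‖ := norm_sub_le _ _
      _ ≤ ‖(gradient f xp - gradient f x - H s) - (M - H) s‖ + ‖g - gradient f x‖
          + ‖((1 / (2 * η)) * r) • s‖ := by
            gcongr; exact norm_sub_le _ _
      _ ≤ ‖gradient f xp - gradient f x - H s‖ + ‖(M - H) s‖ + ‖g - gradient f x‖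
          + ‖((1 / (2 * η)) * r) • s‖ := by
            gcongr; exact norm_sub_le _ _
      _ ≤ L * r ^ 2 + F * r + c + 1 / (2 * η) * r * r := by
            rw [t4, ← hcdef]; gcongr
  -- Young's inequality step
  have hFr : F * r ≤ 1 / (2 * η) * r ^ 2 + η / 2 * F ^ 2 := by
    rw [← sub_nonneg]
    have heq : 1 / (2 * η) * r ^ 2 + η / 2 * F ^ 2 - F * r = (r - η * F) ^ 2 / (2 * η) := by
      field_simp
      ring
    rw [heq]
    positivity
  have hLr : L * r ^ 2 ≤ 1 / (2 * η) * r ^ 2 := mul_le_mul_of_nonneg_right hLη (sq_nonneg r)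
  have hN2 : ‖gradient f xp‖ ≤ 3 / (2 * η) * r ^ 2 + (η / 2 * F ^ 2 + c) := by
    have : 1 / (2 * η) * r * r = 1 / (2 * η) * r ^ 2 := by ring
    rw [this] at hN
    have h3 : (3 : ℝ) / (2 * η) * r ^ 2 = 1 / (2 * η) * r ^ 2 + 1 / (2 * η) * r ^ 2
        + 1 / (2 * η) * r ^ 2 := by ring
    linarith
  -- power step
  set A : ℝ := 3 / (2 * η) * r ^ 2 with hAdef
  set B : ℝ := η / 2 * F ^ 2 with hBdef
  have hA0 : 0 ≤ A := by positivity
  have hB0 : 0 ≤ B := by positivity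
  have hpow : ‖gradient f xp‖ ^ ((3 : ℝ) / 2) ≤ (A + (B + c)) ^ ((3 : ℝ) / 2) :=
    Real.rpow_le_rpow (norm_nonneg _) (by linarith) (by norm_num)
  have h2 : (A + (B + c)) ^ ((3 : ℝ) / 2) ≤
      Real.sqrt 2 * (A ^ ((3 : ℝ) / 2) + (B + c) ^ ((3 : ℝ) / 2)) :=
    add_rpow32_le hA0 (by positivity)
  have h3 : (B + c) ^ ((3 : ℝ) / 2) ≤
      Real.sqrt 2 * (B ^ ((3 : ℝ) / 2) + c ^ ((3 : ℝ) / 2)) := add_rpow32_le hB0 hc0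
  have hsqrt2 : Real.sqrt 2 * Real.sqrt 2 = 2 := Real.mul_self_sqrt (by norm_num)
  have hs2 : (0:ℝ) ≤ Real.sqrt 2 := Real.sqrt_nonneg 2
  have h4 : Real.sqrt 2 * (B + c) ^ ((3 : ℝ) / 2) ≤
      2 * B ^ ((3 : ℝ) / 2) + 2 * c ^ ((3 : ℝ) / 2) := by
    calc Real.sqrt 2 * (B + c) ^ ((3 : ℝ) / 2)
        ≤ Real.sqrt 2 * (Real.sqrt 2 * (B ^ ((3 : ℝ) / 2) + c ^ ((3 : ℝ) / 2))) :=
          mul_le_mul_of_nonneg_left h3 hs2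
      _ = 2 * B ^ ((3 : ℝ) / 2) + 2 * c ^ ((3 : ℝ) / 2) := by
          rw [← mul_assoc, hsqrt2]; ring
  have hchain : ‖gradient f xp‖ ^ ((3 : ℝ) / 2) ≤
      Real.sqrt 2 * A ^ ((3 : ℝ) / 2) + 2 * B ^ ((3 : ℝ) / 2) + 2 * c ^ ((3 : ℝ) / 2) := by
    have h2' : Real.sqrt 2 * (A ^ ((3 : ℝ) / 2) + (B + c) ^ ((3 : ℝ) / 2))
        = Real.sqrt 2 * A ^ ((3 : ℝ) / 2) + Real.sqrt 2 * (B + c) ^ ((3 : ℝ) / 2) := by ring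
    rw [h2'] at h2
    linarith
  -- three termwise bounds
  have hterm1 : Real.sqrt 2 * A ^ ((3 : ℝ) / 2) ≤ 3 / η ^ ((3 : ℝ) / 2) * r ^ 3 := by
    rw [rpow32_eq_sqrt hA0, rpow32_eq_sqrt hη.le, ← Real.sqrt_mul (by norm_num : (0:ℝ) ≤ 2)]
    have hRHS : 3 / Real.sqrt (η ^ 3) * r ^ 3 = Real.sqrt (9 * r ^ 6 / η ^ 3) := by
      rw [Real.sqrt_div (by positivity) (η ^ 3),
        show (9 : ℝ) * r ^ 6 = (3 * r ^ 3) ^ 2 by ring, Real.sqrt_sq (by positivity)]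
      ring
    rw [hRHS]
    apply Real.sqrt_le_sqrt
    have he1 : 2 * A ^ 3 = 27 / 4 * (r ^ 6 / η ^ 3) := by
      rw [hAdef]; field_simp; ring
    have he2 : (9 : ℝ) * r ^ 6 / η ^ 3 = 9 * (r ^ 6 / η ^ 3) := by ring
    rw [he1, he2]
    have hpos : (0:ℝ) ≤ r ^ 6 / η ^ 3 := by positivity
    nlinarith [hpos]
  have hterm2 : 2 * B ^ ((3 : ℝ) / 2) ≤ 3 * η ^ ((3 : ℝ) / 2) / 4 * F ^ 3 := by
    rw [rpow32_eq_sqrt hB0, rpow32_eq_sqrt hη.le]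
    have hL2 : 2 * Real.sqrt (B ^ 3) = Real.sqrt (4 * B ^ 3) := by
      rw [show (4 : ℝ) * B ^ 3 = 2 ^ 2 * B ^ 3 by ring, Real.sqrt_mul (by norm_num),
        Real.sqrt_sq (by norm_num)]
    have hR2 : 3 * Real.sqrt (η ^ 3) / 4 * F ^ 3 = Real.sqrt (9 / 16 * η ^ 3 * F ^ 6) := by
      rw [show (9 : ℝ) / 16 * η ^ 3 * F ^ 6 = η ^ 3 * (3 / 4 * F ^ 3) ^ 2 by ring,
        Real.sqrt_mul (by positivity), Real.sqrt_sq (by positivity)]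
      ring
    rw [hL2, hR2]
    apply Real.sqrt_le_sqrt
    rw [hBdef]
    nlinarith [pow_nonneg hF0 6, pow_pos hη 3]
  have hterm3 : 2 * c ^ ((3 : ℝ) / 2) ≤ 3 * c ^ ((3 : ℝ) / 2) := by
    nlinarith [Real.rpow_nonneg hc0 ((3 : ℝ) / 2)]
  calc ‖gradient f xp‖ ^ ((3 : ℝ) / 2)
      ≤ Real.sqrt 2 * A ^ ((3 : ℝ) / 2) + 2 * B ^ ((3 : ℝ) / 2) + 2 * c ^ ((3 : ℝ) / 2) := hchain
    _ ≤ 3 / η ^ ((3 : ℝ) / 2) * r ^ 3 + 3 * η ^ ((3 : ℝ) / 2) / 4 * F ^ 3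
        + 3 * c ^ ((3 : ℝ) / 2) := by linarith
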